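/- arXiv:1302.0812 — 2 statements merged into one kernel-verified Lean document; each statement's English description precedes it below -/
import Mathlib

section
/- For every pair of graphs (H,J) such that the complement of H and the graph J are both complete multipartite graphs, there exists an integer k > 0 such that every {H,J}-free graph is {K_k, S_k}-split, where K_k is the complete graph on k vertices and S_k is its complement (the edgeless graph on k vertices). -/
/-- A graph `G` contains a graph `H` if some induced subgraph of `G` is isomorphic to `H`. -/
def Contains {α β : Type} (G : SimpleGraph α) (H : SimpleGraph β) : Prop :=
  ∃ s : Set α, Nonempty ((G.induce s) ≃g H)

/-- `G` is `H`-free if `G` does not contain `H`. -/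
def Free {α β : Type} (G : SimpleGraph α) (H : SimpleGraph β) : Prop := ¬ Contains G H

/-- `G` is `{H₁,H₂}`-split if `V(G) = X₁ ∪ X₂` where `G|Xᵢ` is `Hᵢ`-free for `i = 1,2`. -/
def Split {γ α β : Type} (G : SimpleGraph γ) (H₁ : SimpleGraph α) (H₂ : SimpleGraph β) : Prop :=
  ∃ X₁ X₂ : Set γ, X₁ ∪ X₂ = Set.univ ∧ Free (G.induce X₁) H₁ ∧ Free (G.induce X₂) H₂

/-- A complete multipartite graph: the vertex set is partitioned into stable sets
(fibres of `f`) that are pairwise complete to each other. -/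
def IsCompleteMultipartite {α : Type} (G : SimpleGraph α) : Prop :=
  ∃ (ι : Type) (f : α → ι), ∀ u v, G.Adj u v ↔ f u ≠ f v

/-!
Let `A` be a largest vertex set containing no `Q`-clique, and suppose that the rest of `G` contains
a large independent set `S`. A maximum family of disjoint `Q`-cliques inside `A ∪ S` leaves a
remainder without `Q`-cliques, which by the choice of `A` has at most `|A|` vertices; so `A ∪ S`,
which has no `(Q + 1)`-clique since `S` is independent, contains many disjoint `Q`-cliques.
Ramsey's theorem, applied first to the adjacency pattern between pairs of these cliques and then to
the positions inside them, produces either `m` copies of `K_m` with no edges between them or a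
complete `m`-partite graph with parts of size `m`; once `m` is at least the orders of `H` and `J`,
the first contains `H` and the second `J`.
-/

open Finset Function
open scoped SimpleGraph

def orderedRamseyBound (κ : Type*) [Fintype κ] (t : ℕ) : ℕ :=
  (Fintype.card κ + 1) ^ (Fintype.card κ * t)

section OrderedRamsey

variable {α κ : Type*} [LinearOrder α] [Fintype κ] [Nonempty κ]

theorem exists_endHomogeneous (c : α → α → κ) (m : ℕ) (s : Finset α)
    (hs : (Fintype.card κ + 1) ^ m ≤ #s) :
    ∃ t ⊆ s, #t = m ∧ ∃ f : α → κ, ∀ i ∈ t, ∀ j ∈ t, i < j → c i j = f i := by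
  classical
  induction m generalizing s with
  | zero => exact ⟨∅, empty_subset s, rfl, fun _ ↦ Classical.arbitrary κ, by simp⟩
  | succ m ih =>
    have hne : s.Nonempty := card_pos.1 (lt_of_lt_of_le (by positivity) hs)
    set v := s.min' hne
    have hP : 0 < (Fintype.card κ + 1) ^ m := by positivity
    obtain ⟨χ, -, hχ⟩ := exists_le_card_fiber_of_mul_le_card_of_maps_to
      (s := s.erase v) (f := fun j ↦ c v j) (fun j _ ↦ mem_univ _) univ_nonempty
      (n := (Fintype.card κ + 1) ^ m) (by
        rw [card_erase_of_mem (s.min'_mem hne), card_univ]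
        rw [pow_succ, mul_add_one, mul_comm] at hs
        omega)
    obtain ⟨t, hts, htm, f, hf⟩ := ih _ hχ
    have hvt : ∀ j ∈ t, v < j := fun j hj ↦ by
      obtain ⟨hj, -⟩ := mem_filter.1 (hts hj)
      exact lt_of_le_of_ne (s.min'_le j (mem_of_mem_erase hj)) (ne_of_mem_erase hj).symm
    refine ⟨insert v t, insert_subset (s.min'_mem hne) ((hts.trans (filter_subset _ _)).trans
      (erase_subset _ _)), ?_, update f v χ, ?_⟩
    · rw [card_insert_of_notMem fun h ↦ (hvt v h).false, htm]
    · simp only [mem_insert]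
      rintro i (rfl | hi) j (rfl | hj) hij
      · exact absurd hij (lt_irrefl _)
      · simpa using (mem_filter.1 (hts hj)).2
      · exact absurd (hvt i hi) (not_lt.2 hij.le)
      · rw [update_of_ne (hvt i hi).ne', hf i hi j hj hij]

theorem exists_orderEmbedding_homogeneous [Fintype α] (c : α → α → κ) (t : ℕ)
    (h : orderedRamseyBound κ t ≤ Fintype.card α) :
    ∃ (e : Fin t ↪o α) (χ : κ), ∀ i j, i < j → c (e i) (e j) = χ := by
  classical
  obtain ⟨s, -, hs, f, hf⟩ := exists_endHomogeneous c (Fintype.card κ * t) univ h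
  obtain ⟨χ, -, hχ⟩ := exists_le_card_fiber_of_mul_le_card_of_maps_to (s := s) (f := f)
    (fun i _ ↦ mem_univ _) univ_nonempty (n := t) (by rw [card_univ, hs])
  obtain ⟨u, hus, hu⟩ := exists_subset_card_eq hχ
  refine ⟨u.orderEmbOfFin hu, χ, fun i j hij ↦ ?_⟩
  have hi := mem_filter.1 (hus (u.orderEmbOfFin_mem hu i))
  have hj := mem_filter.1 (hus (u.orderEmbOfFin_mem hu j))
  rw [hf _ hi.1 _ hj.1 ((u.orderEmbOfFin hu).strictMono hij), hi.2]

end OrderedRamsey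

theorem contains_iff_isIndContained {α β : Type} {G : SimpleGraph α} {H : SimpleGraph β} :
    Contains G H ↔ H ⊴ G := by
  rw [SimpleGraph.isIndContained_iff_exists_iso_induce]
  exact exists_congr fun _ ↦ ⟨fun ⟨e⟩ ↦ ⟨e.symm⟩, fun ⟨e⟩ ↦ ⟨e.symm⟩⟩

theorem free_induce_top_of_cliqueFreeOn {γ : Type} {G : SimpleGraph γ} {X : Set γ} {k : ℕ}
    (h : G.CliqueFreeOn X k) : Free (G.induce X) (⊤ : SimpleGraph (Fin k)) := fun hc ↦
  (SimpleGraph.not_cliqueFree_iff_top_isContained k).2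
    (contains_iff_isIndContained.1 hc).isContained ((G.cliqueFree_induce_iff X k).2 h)

theorem SimpleGraph.compl_induce {γ : Type*} (G : SimpleGraph γ) (X : Set γ) :
    (G.induce X)ᶜ = Gᶜ.induce X := by
  ext u v
  simp [Subtype.ext_iff]

theorem free_induce_bot_of_cliqueFreeOn_compl {γ : Type} {G : SimpleGraph γ} {X : Set γ}
    {k : ℕ} (h : Gᶜ.CliqueFreeOn X k) : Free (G.induce X) (⊥ : SimpleGraph (Fin k)) := by
  refine fun hc ↦ free_induce_top_of_cliqueFreeOn h (contains_iff_isIndContained.2 ?_)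
  simpa [G.compl_induce] using (contains_iff_isIndContained.1 hc).compl

theorem IsCompleteMultipartite.isIndContained_completeEquipartiteGraph {α : Type} [Fintype α]
    {G : SimpleGraph α} (hG : IsCompleteMultipartite G) {m : ℕ} (hm : Fintype.card α ≤ m) :
    G ⊴ SimpleGraph.completeEquipartiteGraph m m := by
  obtain ⟨ι, f, hf⟩ := hG
  let r := surjInv (Set.rangeFactorization_surjective (f := f))
  have hr : Injective r := injective_surjInv _
  let idx : α ↪ Fin m := (Fintype.equivFin α).toEmbedding.trans (Fin.castLEEmb hm)
  refine ⟨⟨⟨fun u ↦ (idx (r (Set.rangeFactorization f u)), idx u),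
    fun u v h ↦ idx.injective (Prod.ext_iff.1 h).2⟩, ?_⟩⟩
  intro u v
  simp [hf, hr.eq_iff, Set.rangeFactorization]

theorem SimpleGraph.CliqueFreeOn.union_of_isIndepSet {γ : Type*} {G : SimpleGraph γ}
    {A S : Set γ} {k : ℕ} (hA : G.CliqueFreeOn A k) (hS : G.IsIndepSet S) :
    G.CliqueFreeOn (A ∪ S) (k + 1) := by
  classical
  intro T hT hTc
  by_cases hTA : ↑T ⊆ A
  · exact hA.mono _ k.le_succ hTA hTc
  obtain ⟨v, hvT, hvA⟩ := Set.not_subset.1 hTA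
  have hvS : v ∈ S := (hT hvT).resolve_left hvA
  refine hA (t := T.erase v) (fun w hw ↦ ?_) (by simpa using hTc.erase_of_mem hvT)
  obtain ⟨hwv, hwT⟩ := mem_erase.1 hw
  exact (hT hwT).resolve_right fun hwS ↦ hS hwS hvS hwv (hTc.isClique hwT hvT hwv)

theorem exists_pairwiseDisjoint_isNClique {γ : Type*} {G : SimpleGraph γ}
    {Q a : ℕ} (hQ : 0 < Q) (hmax : ∀ B : Finset γ, G.CliqueFreeOn B Q → #B ≤ a)
    (Y : Finset γ) :
    ∃ 𝓑 : Finset (Finset γ), (𝓑 : Set (Finset γ)).PairwiseDisjoint id ∧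
      (∀ B ∈ 𝓑, B ⊆ Y ∧ G.IsNClique Q B) ∧ #Y ≤ a + Q * #𝓑 := by
  classical
  let families := (Y.powerset.filter (G.IsNClique Q ·)).powerset.filter
    fun 𝓑 : Finset (Finset γ) ↦ (𝓑 : Set (Finset γ)).PairwiseDisjoint id
  obtain ⟨𝓑, h𝓑, hmax𝓑⟩ := families.exists_max_image card ⟨∅, by simp [families]⟩
  simp only [families, mem_filter, mem_powerset] at h𝓑 hmax𝓑
  have hblocks : ∀ B ∈ 𝓑, B ⊆ Y ∧ G.IsNClique Q B := fun B hB ↦ by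
    simpa using h𝓑.1 hB
  refine ⟨𝓑, h𝓑.2, hblocks, ?_⟩
  set X := 𝓑.biUnion id
  have hrest : G.CliqueFreeOn ↑(Y \ X) Q := by
    intro B hB hBc
    have hBX : Disjoint B X := disjoint_left.2 fun x hx ↦ (mem_sdiff.1 (hB hx)).2
    have hB𝓑 : B ∉ 𝓑 := fun h ↦ by
      obtain ⟨x, hx⟩ := card_pos.1 (hBc.card_eq ▸ hQ)
      exact disjoint_left.1 hBX hx (mem_biUnion.2 ⟨B, h, hx⟩)
    have hins := hmax𝓑 (insert B 𝓑)
      ⟨insert_subset (by simpa using ⟨hB.trans sdiff_subset, hBc⟩) h𝓑.1, by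
        rw [coe_insert]
        exact h𝓑.2.insert fun C hC _ ↦ hBX.mono_right (subset_biUnion_of_mem id hC)⟩
    rw [card_insert_of_notMem hB𝓑] at hins
    omega
  calc #Y ≤ #(Y \ X) + #X := card_le_card_sdiff_add_card
    _ ≤ a + Q * #𝓑 := by
      gcongr
      · exact hmax _ hrest
      · calc #X ≤ ∑ B ∈ 𝓑, #B := card_biUnion_le
          _ = Q * #𝓑 := by
            rw [sum_congr rfl fun B hB ↦ (hblocks B hB).2.card_eq, sum_const, smul_eq_mul,
              mul_comm]

theorem exists_copy_of_pairwiseDisjoint {γ : Type*} {G : SimpleGraph γ} {Q n : ℕ}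
    {𝓑 : Finset (Finset γ)} {Y : Finset γ} (hd : (𝓑 : Set (Finset γ)).PairwiseDisjoint id)
    (hc : ∀ B ∈ 𝓑, B ⊆ Y ∧ G.IsNClique Q B) (hn : n ≤ #𝓑) :
    ∃ f : (SimpleGraph.completeEquipartiteGraph n Q)ᶜ.Copy G, Set.range f ⊆ Y := by
  obtain ⟨𝓒, h𝓒, hcard⟩ := exists_subset_card_eq hn
  let block : Fin n → Finset γ := fun i ↦ (𝓒.equivFinOfCardEq hcard).symm i
  have hblock : ∀ i, block i ∈ 𝓑 := fun i ↦ h𝓒 ((𝓒.equivFinOfCardEq hcard).symm i).2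
  have henum : ∀ i, ∃ g : Fin Q ↪ γ, ∀ x, g x ∈ block i := fun i ↦
    ⟨((block i).equivFinOfCardEq (hc _ (hblock i)).2.card_eq).symm.toEmbedding.trans
      (Embedding.subtype _), fun x ↦ (((block i).equivFinOfCardEq _).symm x).2⟩
  choose g hmem using henum
  refine ⟨⟨⟨fun p ↦ g p.1 p.2, fun {p q} hpq ↦ ?_⟩, fun {p q} hpq ↦ ?_⟩, ?_⟩
  · obtain ⟨i, x⟩ := p
    obtain ⟨j, y⟩ := q
    obtain ⟨hne, hij⟩ := (SimpleGraph.compl_adj _ _ _).1 hpq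
    obtain rfl : i = j := by simpa using hij
    exact (hc _ (hblock i)).2.isClique (hmem i x) (hmem i y)
      ((g i).injective.ne fun h ↦ hne (h ▸ rfl))
  · obtain ⟨i, x⟩ := p
    obtain ⟨j, y⟩ := q
    obtain rfl : i = j := by
      by_contra hij
      have hne : block i ≠ block j := fun h ↦
        hij ((𝓒.equivFinOfCardEq hcard).symm.injective (Subtype.ext h))
      exact disjoint_left.1 (hd (hblock i) (hblock j) hne) (hmem i x) (hpq ▸ hmem j y)
    rw [(g i).injective (a₁ := x) hpq]
  · rintro _ ⟨p, rfl⟩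
    exact (hc _ (hblock p.1)).1 (hmem p.1 p.2)

structure HomogeneousBlocks {γ : Type*} (G : SimpleGraph γ) (N Q : ℕ) where
  vert : Fin N → Fin Q → γ
  rel : Fin Q → Fin Q → Prop
  injective : Injective (uncurry vert)
  adj_of_ne : ∀ u {x y}, x ≠ y → G.Adj (vert u x) (vert u y)
  adj_iff : ∀ {u v}, u < v → ∀ x y, G.Adj (vert u x) (vert v y) ↔ rel x y
  not_rel_self : ∀ x, ¬ rel x x

namespace HomogeneousBlocks

variable {γ : Type*} {G : SimpleGraph γ} {N Q m : ℕ}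

theorem eq_and_eq_of_vert_eq (B : HomogeneousBlocks G N Q) {u v : Fin N} {x y : Fin Q}
    (h : B.vert u x = B.vert v y) : u = v ∧ x = y :=
  Prod.ext_iff.1 (B.injective (a₁ := (u, x)) (a₂ := (v, y)) h)

theorem adj_iff_of_gt (B : HomogeneousBlocks G N Q) {u v : Fin N} (h : v < u) (x y : Fin Q) :
    G.Adj (B.vert u x) (B.vert v y) ↔ B.rel y x := by
  rw [G.adj_comm]
  exact B.adj_iff h y x

theorem not_adj_of_ne (B : HomogeneousBlocks G N Q) {u v : Fin N} (h : u ≠ v) (x : Fin Q) :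
    ¬ G.Adj (B.vert u x) (B.vert v x) := by
  rcases h.lt_or_gt with h | h
  · exact fun ha ↦ B.not_rel_self x ((B.adj_iff h x x).1 ha)
  · exact fun ha ↦ B.not_rel_self x ((B.adj_iff_of_gt h x x).1 ha)

theorem completeEquipartiteGraph_isIndContained (B : HomogeneousBlocks G N Q) (hN : m * m ≤ N)
    (p : Fin m → Fin Q) (hp : ∀ u v, u < v → B.rel (p u) (p v)) :
    SimpleGraph.completeEquipartiteGraph m m ⊴ G := by
  let idx : Fin m × Fin m → Fin N := fun w ↦ Fin.castLE hN (finProdFinEquiv w)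
  have hidx_inj : Injective idx := (Fin.castLE_injective hN).comp finProdFinEquiv.injective
  have hidx : ∀ {u v : Fin m} (x y : Fin m), u < v → idx (u, x) < idx (v, y) := by
    intro u v x y huv
    simp only [idx, Fin.lt_def, Fin.val_castLE, finProdFinEquiv_apply_val]
    nlinarith [x.2, Nat.mul_le_mul_left m (Fin.lt_def.1 huv)]
  refine ⟨⟨⟨fun w ↦ B.vert (idx w) (p w.1),
    fun w w' h ↦ hidx_inj (B.eq_and_eq_of_vert_eq h).1⟩, fun {w w'} ↦ ?_⟩⟩
  obtain ⟨u, x⟩ := w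
  obtain ⟨v, y⟩ := w'
  change G.Adj (B.vert (idx (u, x)) (p u)) (B.vert (idx (v, y)) (p v)) ↔ u ≠ v
  rcases lt_trichotomy u v with h | rfl | h
  · simp [h.ne, B.adj_iff (hidx x y h), hp u v h]
  · simp only [ne_eq, not_true_eq_false, iff_false]
    rcases eq_or_ne x y with rfl | hxy
    · exact G.irrefl
    · exact B.not_adj_of_ne (hidx_inj.ne fun h ↦ hxy (Prod.ext_iff.1 h).2) _
  · simp [h.ne', B.adj_iff_of_gt (hidx y x h), hp v u h]

theorem compl_completeEquipartiteGraph_isIndContained (B : HomogeneousBlocks G N Q) (hN : m ≤ N)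
    (p : Fin m ↪ Fin Q) (hp : ∀ x y, x ≠ y → ¬ B.rel (p x) (p y)) :
    (SimpleGraph.completeEquipartiteGraph m m)ᶜ ⊴ G := by
  have hp' : ∀ x y, ¬ B.rel (p x) (p y) := fun x y ↦ by
    rcases eq_or_ne x y with rfl | hxy
    exacts [B.not_rel_self _, hp x y hxy]
  refine ⟨⟨⟨fun w ↦ B.vert (Fin.castLE hN w.1) (p w.2), fun w w' h ↦ ?_⟩,
    fun {w w'} ↦ ?_⟩⟩
  · obtain ⟨h₁, h₂⟩ := B.eq_and_eq_of_vert_eq h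
    exact Prod.ext (Fin.castLE_injective hN h₁) (p.injective h₂)
  obtain ⟨i, x⟩ := w
  obtain ⟨j, y⟩ := w'
  change G.Adj (B.vert (Fin.castLE hN i) (p x)) (B.vert (Fin.castLE hN j) (p y)) ↔
    (i, x) ≠ (j, y) ∧ ¬ i ≠ j
  rcases lt_trichotomy i j with h | rfl | h
  · simp [h.ne, B.adj_iff ((Fin.castLE_lt_castLE_iff hN).2 h), hp']
  · rcases eq_or_ne x y with rfl | hxy
    · simp
    · simp [hxy, B.adj_of_ne _ (p.injective.ne hxy)]
  · simp [h.ne', B.adj_iff_of_gt ((Fin.castLE_lt_castLE_iff hN).2 h), hp']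

theorem isIndContained_or (B : HomogeneousBlocks G N Q) (hN : m * m ≤ N)
    (hQ : orderedRamseyBound (Prop × Prop) m ≤ Q) :
    (SimpleGraph.completeEquipartiteGraph m m)ᶜ ⊴ G ∨
      SimpleGraph.completeEquipartiteGraph m m ⊴ G := by
  obtain ⟨e, ⟨P₁, P₂⟩, he⟩ := exists_orderEmbedding_homogeneous
    (fun x y ↦ (B.rel x y, B.rel y x)) m (by simpa using hQ)
  simp only [Prod.mk.injEq] at he
  by_cases h₁ : P₁
  · exact .inr <| B.completeEquipartiteGraph_isIndContained hN e fun u v huv ↦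
      (he u v huv).1 ▸ h₁
  by_cases h₂ : P₂
  · exact .inr <| B.completeEquipartiteGraph_isIndContained hN (e ∘ Fin.rev) fun u v huv ↦
      (he _ _ (Fin.rev_lt_rev.2 huv)).2 ▸ h₂
  refine .inl (B.compl_completeEquipartiteGraph_isIndContained ((Nat.le_mul_self m).trans hN)
    e.toEmbedding fun x y hxy ↦ ?_)
  rcases hxy.lt_or_gt with h | h
  · exact (he x y h).1 ▸ h₁
  · exact (he y x h).2 ▸ h₂

end HomogeneousBlocks

theorem exists_homogeneousBlocks {γ : Type*} {G : SimpleGraph γ} {n N Q : ℕ}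
    (f : (SimpleGraph.completeEquipartiteGraph n Q)ᶜ.Copy G)
    (hf : G.CliqueFreeOn (Set.range f) N)
    (hn : orderedRamseyBound (Fin Q → Fin Q → Prop) N ≤ n) :
    Nonempty (HomogeneousBlocks G N Q) := by
  classical
  obtain ⟨e, M, he⟩ := exists_orderEmbedding_homogeneous
    (fun i j x y ↦ G.Adj (f (i, x)) (f (j, y))) N (by simpa using hn)
  have hadj : ∀ u v, u < v → ∀ x y, G.Adj (f (e u, x)) (f (e v, y)) ↔ M x y := by
    intro u v huv x y
    rw [← he u v huv]
  refine ⟨⟨fun u x ↦ f (e u, x), M, ?_, ?_, hadj _ _, ?_⟩⟩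
  · rintro ⟨u, x⟩ ⟨v, y⟩ h
    obtain ⟨h₁, h₂⟩ := Prod.ext_iff.1 (f.injective h)
    exact Prod.ext (e.injective h₁) h₂
  · intro u x y hxy
    exact f.toHom.map_adj (by simp [hxy])
  · intro x hx
    have hinj : Injective fun u ↦ f (e u, x) := fun u v h ↦
      e.injective (Prod.ext_iff.1 (f.injective h)).1
    refine hf (t := univ.map ⟨_, hinj⟩) (by simp [Set.range_subset_iff]) ⟨?_, by simp⟩
    rw [coe_map, coe_univ, Set.image_univ]
    rintro _ ⟨u, rfl⟩ _ ⟨v, rfl⟩ huv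
    rcases lt_or_gt_of_ne (ne_of_apply_ne _ huv) with h | h
    · exact (hadj u v h x x).2 hx
    · exact ((hadj v u h x x).2 hx).symm

theorem exists_split_of_free_completeEquipartiteGraph (m : ℕ) :
    ∃ k, 0 < k ∧ ∀ {γ : Type} [Fintype γ] (G : SimpleGraph γ),
      ¬ (SimpleGraph.completeEquipartiteGraph m m)ᶜ ⊴ G →
      ¬ SimpleGraph.completeEquipartiteGraph m m ⊴ G →
      ∃ A : Set γ, G.CliqueFreeOn A k ∧ Gᶜ.CliqueFreeOn Aᶜ k := by
  classical
  set Q := orderedRamseyBound (Prop × Prop) m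
  -- `m * m` blocks carry the complete multipartite pattern; more than `Q` blocks exclude
  -- adjacency between equal positions, as the blocks lie in a set without `(Q + 1)`-cliques.
  set N := m * m + Q + 1
  set n := orderedRamseyBound (Fin Q → Fin Q → Prop) N
  have hQ : 0 < Q := pow_pos (Nat.succ_pos _) _
  refine ⟨Q * (n + 1), by positivity, fun {γ} _ G hH hJ ↦ ?_⟩
  obtain ⟨A, hA, hmax⟩ : ∃ A : Finset γ, G.CliqueFreeOn A Q ∧
      ∀ B : Finset γ, G.CliqueFreeOn B Q → #B ≤ #A := by
    obtain ⟨A, hA, hmax⟩ := (univ.filter fun A : Finset γ ↦ G.CliqueFreeOn A Q)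
      |>.exists_max_image card ⟨∅, by simpa using hQ.ne'⟩
    exact ⟨A, (mem_filter.1 hA).2, fun B hB ↦ hmax B (by simpa using hB)⟩
  refine ⟨A, hA.mono _ (Nat.le_mul_of_pos_right Q n.succ_pos), fun S hSA hS ↦ ?_⟩
  obtain ⟨𝓑, hd, hc, hcard⟩ := exists_pairwiseDisjoint_isNClique hQ hmax (A ∪ S)
  have hn : n ≤ #𝓑 := by
    have hdisj : Disjoint A S := disjoint_left.2 fun x hxA hxS ↦ hSA hxS hxA
    rw [card_union_of_disjoint hdisj, hS.card_eq] at hcard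
    have := Nat.le_of_mul_le_mul_left (show Q * (n + 1) ≤ Q * #𝓑 by omega) hQ
    omega
  obtain ⟨f, hf⟩ := exists_copy_of_pairwiseDisjoint hd hc hn
  have hfree : G.CliqueFreeOn (Set.range f) N :=
    (SimpleGraph.CliqueFreeOn.subset _ (by simpa using hf)
      (hA.union_of_isIndepSet ((G.isClique_compl).1 hS.isClique))).mono _ (by omega)
  obtain ⟨B⟩ := exists_homogeneousBlocks f hfree le_rfl
  exact (B.isIndContained_or (by omega) le_rfl).elim hH hJ

/-- For every pair of graphs (H,J) such that `Hᶜ` and `J` are complete multipartite,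
there exists an integer `k > 0` such that every `{H,J}`-free graph is `{K_k,S_k}`-split. -/
theorem stmt1 {α β : Type} [Fintype α] [Fintype β]
    (H : SimpleGraph α) (J : SimpleGraph β)
    (hH : IsCompleteMultipartite Hᶜ) (hJ : IsCompleteMultipartite J) :
    ∃ k : ℕ, 0 < k ∧
      ∀ (γ : Type) [Fintype γ] (G : SimpleGraph γ), Free G H → Free G J →
        Split G (⊤ : SimpleGraph (Fin k)) (⊥ : SimpleGraph (Fin k)) := by
  set m := Fintype.card α + Fintype.card β
  obtain ⟨k, hk, hsplit⟩ := exists_split_of_free_completeEquipartiteGraph m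
  refine ⟨k, hk, fun γ _ G hGH hGJ ↦ ?_⟩
  have hHm := (hH.isIndContained_completeEquipartiteGraph (m := m) le_self_add).compl
  have hJm := hJ.isIndContained_completeEquipartiteGraph (m := m) le_add_self
  rw [compl_compl] at hHm
  obtain ⟨A, hA, hAc⟩ := hsplit G (fun h ↦ hGH (contains_iff_isIndContained.2 (hHm.trans h)))
    (fun h ↦ hGJ (contains_iff_isIndContained.2 (hJm.trans h)))
  exact ⟨A, Aᶜ, Set.union_compl_self A, free_induce_top_of_cliqueFreeOn hA,
    free_induce_bot_of_cliqueFreeOn_compl hAc⟩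
end

section
/- Let H be a hypergraph on a finite vertex set V such that every hyperedge of H has at least two vertices and H has no cycle of length t for any t ≥ 2. Then V can be partitioned into two sets X and Y such that every hyperedge of H has exactly one vertex in Y. -/
/-- `HypCycle E t` says the hypergraph with hyperedge set `E` has a cycle of length `t`:
for `t = 2`, a pair of distinct vertices contained in two distinct hyperedges;
for `t ≥ 3`, a sequence of distinct vertices `v_0, …, v_{t-1}` (indexed cyclically by
`ZMod t`) such that for each `i` some hyperedge meets `{v_0,…,v_{t-1}}` exactly in
`{v_i, v_{i+1}}`. -/
def HypCycle {V : Type} (E : Set (Finset V)) (t : ℕ) : Prop :=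
  (t = 2 ∧ ∃ u v : V, u ≠ v ∧ ∃ A ∈ E, ∃ B ∈ E, A ≠ B ∧
      u ∈ A ∧ v ∈ A ∧ u ∈ B ∧ v ∈ B) ∨
  (3 ≤ t ∧ ∃ f : ZMod t → V, Function.Injective f ∧
      ∀ i : ZMod t, ∃ A ∈ E, (↑A : Set V) ∩ Set.range f = {f i, f (i + 1)})


section ConfigAux

variable {V : Type}

def IsConfig (E : Set (Finset V)) (t : ℕ) (v : ℕ → V) (A : ℕ → Finset V) : Prop :=
  2 ≤ t ∧ (∀ i < t, A i ∈ E) ∧ (∀ i < t, ∀ j < t, i ≠ j → v i ≠ v j) ∧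
  (∀ i < t, v i ∈ A i ∧ v ((i + 1) % t) ∈ A i) ∧ (∃ i < t, A i ≠ A ((i + 1) % t))

lemma exists_rot_inv (t r j : ℕ) (ht : 0 < t) (hj : j < t) :
    ∃ i < t, (i + r) % t = j := by
  refine ⟨(j + (t - r % t)) % t, Nat.mod_lt _ ht, ?_⟩
  rw [Nat.mod_add_mod]
  have hm : r % t < t := Nat.mod_lt _ ht
  have hq : r % t + t * (r / t) = r := Nat.mod_add_div r t
  have hmul : t * (r / t + 1) = t * (r / t) + t := by ring
  have key : j + (t - r % t) + r = j + t * (r / t + 1) := by omega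
  rw [key, Nat.add_mul_mod_self_left, Nat.mod_eq_of_lt hj]

lemma IsConfig.rotate {E : Set (Finset V)} {t : ℕ} {v : ℕ → V} {A : ℕ → Finset V}
    (h : IsConfig E t v A) (r : ℕ) :
    IsConfig E t (fun k => v ((k + r) % t)) (fun k => A ((k + r) % t)) := by
  obtain ⟨ht2, hedge, hinj, hmem, hwit⟩ := h
  have ht0 : 0 < t := by omega
  refine ⟨ht2, ?_, ?_, ?_, ?_⟩
  · intro i hi
    exact hedge _ (Nat.mod_lt _ ht0)
  · intro i hi j hj hij
    show v ((i + r) % t) ≠ v ((j + r) % t)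
    apply hinj _ (Nat.mod_lt _ ht0) _ (Nat.mod_lt _ ht0)
    intro hmod
    have h1 : i + r ≡ j + r [MOD t] := hmod
    have h2 : i ≡ j [MOD t] := Nat.ModEq.add_right_cancel' r h1
    have h3 := h2
    unfold Nat.ModEq at h3
    rw [Nat.mod_eq_of_lt hi, Nat.mod_eq_of_lt hj] at h3
    exact hij h3
  · intro i hi
    have hlt : (i + r) % t < t := Nat.mod_lt _ ht0
    have e : ((i + 1) % t + r) % t = ((i + r) % t + 1) % t := by
      rw [Nat.mod_add_mod, Nat.mod_add_mod]
      congr 1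
      omega
    refine ⟨(hmem _ hlt).1, ?_⟩
    show v (((i + 1) % t + r) % t) ∈ A ((i + r) % t)
    rw [e]
    exact (hmem _ hlt).2
  · obtain ⟨j, hj, hne⟩ := hwit
    obtain ⟨i, hi, hir⟩ := exists_rot_inv t r j ht0 hj
    refine ⟨i, hi, ?_⟩
    show A ((i + r) % t) ≠ A (((i + 1) % t + r) % t)
    have e : ((i + 1) % t + r) % t = ((i + r) % t + 1) % t := by
      rw [Nat.mod_add_mod, Nat.mod_add_mod]; congr 1; omega
    rw [e, hir]
    exact hne


lemma min_config_cycle (E : Set (Finset V)) (t : ℕ) (v : ℕ → V) (A : ℕ → Finset V)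
    (hC : IsConfig E t v A) (hmin : ∀ s, s < t → ¬ ∃ w B, IsConfig E s w B) :
    HypCycle E t := by
  obtain ⟨ht2, hedge, hinj, hmem, hwit⟩ := hC
  have ht0 : 0 < t := by omega
  rcases eq_or_lt_of_le ht2 with ht | ht3
  · -- t = 2
    subst ht
    left
    obtain ⟨j, hj, hne⟩ := hwit
    have hA01 : A 0 ≠ A 1 :=by
      interval_cases j
      · simpa using hne
      · intro e; exact hne (by simpa using e.symm)
    refine ⟨rfl, v 0, v 1, hinj 0 (by omega) 1 (by omega) (by omega), A 0,
      hedge 0 (by omega), A 1, hedge 1 (by omega), hA01, (hmem 0 (by omega)).1, ?_, ?_,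
      (hmem 1 (by omega)).1⟩
    · simpa using (hmem 0 (by omega)).2
    · simpa using (hmem 1 (by omega)).2
  · -- t ≥ 3
    have ht3' : 3 ≤ t := ht3
    have hCfull : IsConfig E t v A := ⟨ht2, hedge, hinj, hmem, hwit⟩
    have S1 : ∀ i < t, A i ≠ A ((i + 1) % t) := by
      intro i hi hAi
      have hC' := hCfull.rotate ((i + 1) % t)
      set r := (i + 1) % t with hrdef
      obtain ⟨-, hedge', hinj', hmem', hwit'⟩ := hC'
      set v' : ℕ → V := fun k => v ((k + r) % t) with hv'
      set A' : ℕ → Finset V := fun k => A ((k + r) % t) with hA'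
      have hr : r < t := Nat.mod_lt _ ht0
      have hA'0 : A' 0 = A r := by
        show A ((0 + r) % t) = A r
        rw [Nat.zero_add, Nat.mod_eq_of_lt hr]
      have hA't1 : A' (t - 1) = A i := by
        show A ((t - 1 + r) % t) = A i
        congr 1
        rcases Nat.lt_or_ge (i + 1) t with h1 | h1
        · have hri : r = i + 1 := by rw [hrdef, Nat.mod_eq_of_lt h1]
          rw [hri]
          have e : t - 1 + (i + 1) = t + i := by omega
          rw [e, Nat.add_mod_left, Nat.mod_eq_of_lt hi]
        · have hit : i = t - 1 := by omega
          have hr0 : r = 0 := by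
            rw [hrdef]
            have e : i + 1 = t := by omega
            rw [e, Nat.mod_self]
          rw [hr0, hit, Nat.add_zero, Nat.mod_eq_of_lt (by omega)]
      have heq : A' (t - 1) = A' 0 := by rw [hA't1, hA'0, hrdef]; exact hAi
      apply hmin (t - 1) (by omega)
      refine ⟨fun k => v' (k + 1), fun k => A' (k + 1), by omega, ?_, ?_, ?_, ?_⟩
      · intro k hk
        show A' (k + 1) ∈ E
        exact hedge' (k + 1) (by omega)
      · intro k hk l hl hkl
        show v' (k + 1) ≠ v' (l + 1)
        exact hinj' (k + 1) (by omega) (l + 1) (by omega) (by omega)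
      · intro k hk
        refine ⟨(hmem' (k + 1) (by omega)).1, ?_⟩
        show v' ((k + 1) % (t - 1) + 1) ∈ A' (k + 1)
        rcases Nat.lt_or_ge (k + 1) (t - 1) with h1 | h1
        · rw [Nat.mod_eq_of_lt h1]
          have hm := (hmem' (k + 1) (by omega)).2
          rwa [Nat.mod_eq_of_lt (show k + 1 + 1 < t by omega)] at hm
        · have hk1 : k + 1 = t - 1 := by omega
          rw [hk1, Nat.mod_self, heq]
          have hm := (hmem' 0 (by omega)).2
          rwa [Nat.mod_eq_of_lt (show 0 + 1 < t by omega)] at hm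
      · obtain ⟨j, hj, hne⟩ := hwit'
        have hjt1 : j ≠ t - 1 := by
          intro e
          apply hne
          rw [e]
          have e2 : (t - 1 + 1) % t = 0 := by
            rw [show t - 1 + 1 = t by omega, Nat.mod_self]
          rw [e2, heq]
        rcases Nat.eq_zero_or_pos j with hj0 | hj1
        · refine ⟨t - 2, by omega, ?_⟩
          show A' (t - 2 + 1) ≠ A' ((t - 2 + 1) % (t - 1) + 1)
          rw [show t - 2 + 1 = t - 1 by omega, Nat.mod_self, heq]
          subst hj0
          rwa [Nat.mod_eq_of_lt (show 0 + 1 < t by omega)] at hne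
        · refine ⟨j - 1, by omega, ?_⟩
          show A' (j - 1 + 1) ≠ A' ((j - 1 + 1) % (t - 1) + 1)
          rw [show j - 1 + 1 = j by omega, Nat.mod_eq_of_lt (show j < t - 1 by omega)]
          rwa [Nat.mod_eq_of_lt (show j + 1 < t by omega)] at hne
    have S2 : ∀ i < t, ∀ j < t, v j ∈ A i → j = i ∨ j = (i + 1) % t := by
      intro i hi j hj hvj
      by_contra hne
      push_neg at hne
      obtain ⟨hji, hji1⟩ := hne
      have hC' := hCfull.rotate i
      obtain ⟨-, hedge', hinj', hmem', hwit'⟩ := hC'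
      set v' : ℕ → V := fun k => v ((k + i) % t) with hv'
      set A' : ℕ → Finset V := fun k => A ((k + i) % t) with hA'
      obtain ⟨j', hj', hrot⟩ := exists_rot_inv t i j ht0 hj
      have hv'j' : v' j' = v j := by show v ((j' + i) % t) = v j; rw [hrot]
      have hA'0 : A' 0 = A i := by
        show A ((0 + i) % t) = A i
        rw [Nat.zero_add, Nat.mod_eq_of_lt hi]
      have hA'1 : A' 1 = A ((i + 1) % t) := by
        show A ((1 + i) % t) = A ((i + 1) % t)
        rw [Nat.add_comm]
      have h0 : j' ≠ 0 := by
        intro e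
        apply hji
        rw [e, Nat.zero_add, Nat.mod_eq_of_lt hi] at hrot
        omega
      have h1 : j' ≠ 1 := by
        intro e
        apply hji1
        rw [e, Nat.add_comm] at hrot
        omega
      have hj'2 : 2 ≤ j' := by omega
      apply hmin j' (by omega)
      refine ⟨fun k => v' (k + 1), fun k => if k + 1 = j' then A' 0 else A' (k + 1),
        hj'2, ?_, ?_, ?_, ?_⟩
      · intro k hk
        show (if k + 1 = j' then A' 0 else A' (k + 1)) ∈ E
        by_cases h : k + 1 = j'
        · rw [if_pos h, hA'0]; exact hedge i hi
        · rw [if_neg h]; exact hedge' (k + 1) (by omega)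
      · intro k hk l hl hkl
        show v' (k + 1) ≠ v' (l + 1)
        exact hinj' (k + 1) (by omega) (l + 1) (by omega) (by omega)
      · intro k hk
        constructor
        · show v' (k + 1) ∈ (if k + 1 = j' then A' 0 else A' (k + 1))
          by_cases h : k + 1 = j'
          · rw [if_pos h, hA'0, h, hv'j']
            exact hvj
          · rw [if_neg h]
            exact (hmem' (k + 1) (by omega)).1
        · show v' ((k + 1) % j' + 1) ∈ (if k + 1 = j' then A' 0 else A' (k + 1))
          by_cases h : k + 1 = j'
          · rw [if_pos h, h, Nat.mod_self]
            have hm := (hmem' 0 (by omega)).2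
            rwa [Nat.mod_eq_of_lt (show 0 + 1 < t by omega)] at hm
          · rw [if_neg h, Nat.mod_eq_of_lt (show k + 1 < j' by omega)]
            have hm := (hmem' (k + 1) (by omega)).2
            rwa [Nat.mod_eq_of_lt (show k + 1 + 1 < t by omega)] at hm
      · refine ⟨j' - 1, by omega, ?_⟩
        show (if j' - 1 + 1 = j' then A' 0 else A' (j' - 1 + 1)) ≠
          (if (j' - 1 + 1) % j' + 1 = j' then A' 0 else A' ((j' - 1 + 1) % j' + 1))
        have e1 : j' - 1 + 1 = j' := by omega
        rw [e1, Nat.mod_self, if_pos rfl, if_neg (by omega)]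
        rw [hA'0, hA'1]
        exact S1 i hi
    -- assemble the cycle
    right
    haveI : NeZero t := ⟨by omega⟩
    haveI : Fact (1 < t) := ⟨by omega⟩
    refine ⟨ht3', fun i : ZMod t => v i.val, ?_, ?_⟩
    · intro a b hab
      by_contra hne
      exact hinj a.val (ZMod.val_lt a) b.val (ZMod.val_lt b)
        (fun e => hne (ZMod.val_injective t e)) hab
    · intro i
      refine ⟨A i.val, hedge i.val (ZMod.val_lt i), ?_⟩
      have hval : (i + 1).val = (i.val + 1) % t := by
        rw [ZMod.val_add, ZMod.val_one]
      ext x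
      simp only [Set.mem_inter_iff, Set.mem_range, Set.mem_insert_iff,
        Set.mem_singleton_iff, Finset.coe_insert]
      constructor
      · rintro ⟨hxA, j, rfl⟩
        rcases S2 i.val (ZMod.val_lt i) j.val (ZMod.val_lt j) hxA with h | h
        · left
          show v j.val = v i.val
          rw [ZMod.val_injective t h]
        · right
          show v j.val = v (i + 1).val
          rw [hval, ← h]
      · rintro (h | h) <;> rw [h]
        · exact ⟨(hmem i.val (ZMod.val_lt i)).1, ⟨i, rfl⟩⟩
        · refine ⟨?_, ⟨i + 1, rfl⟩⟩
          show v (i + 1).val ∈ A i.val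
          rw [hval]
          exact (hmem i.val (ZMod.val_lt i)).2

lemma config_to_cycle (E : Set (Finset V)) (h : ∃ t v A, IsConfig E t v A) :
    ∃ t, 2 ≤ t ∧ HypCycle E t := by
  classical
  obtain ⟨v, A, hC⟩ := Nat.find_spec h
  exact ⟨Nat.find h, hC.1, min_config_cycle E _ v A hC
    (fun s hs hex => Nat.find_min h hs hex)⟩

lemma hypCycle'_mono {E₁ E₂ : Set (Finset V)} (hsub : E₁ ⊆ E₂) {t : ℕ}
    (h : HypCycle E₁ t) : HypCycle E₂ t := by
  rcases h with ⟨h2, u, w, huw, A, hA, B, hB, rest⟩ | ⟨h3, f, hf, hedge⟩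
  · exact Or.inl ⟨h2, u, w, huw, A, hsub hA, B, hsub hB, rest⟩
  · refine Or.inr ⟨h3, f, hf, fun i => ?_⟩
    obtain ⟨A, hA, hint⟩ := hedge i
    exact ⟨A, hsub hA, hint⟩

lemma exists_leaf [Finite V] (E : Set (Finset V)) (hE : E.Nonempty)
    (hcyc : ∀ t, 2 ≤ t → ¬ HypCycle E t) :
    ∃ A ∈ E, ∀ x ∈ A, ∀ y ∈ A,
      (∃ B ∈ E, B ≠ A ∧ x ∈ B) → (∃ C ∈ E, C ≠ A ∧ y ∈ C) → x = y := by
  classical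
  by_contra hbad
  push_neg at hbad
  -- every edge has two distinct vertices shared with other edges
  have hstep : ∀ B, B ∈ E → ∀ u : V, ∃ p : Finset V × V,
      p.1 ∈ E ∧ p.2 ∈ B ∧ p.2 ∈ p.1 ∧ p.1 ≠ B ∧ p.2 ≠ u := by
    intro B hB u
    obtain ⟨x, hxB, y, hyB, hxs, hys, hxy⟩ := hbad B hB
    by_cases hxu : x = u
    · obtain ⟨C, hC, hCB, hyC⟩ := hys
      exact ⟨(C, y), hC, hyB, hyC, hCB, by rw [← hxu]; exact hxy.symm⟩
    · obtain ⟨C, hC, hCB, hxC⟩ := hxs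
      exact ⟨(C, x), hC, hxB, hxC, hCB, hxu⟩
  choose step hstepE hstepB hstepN hstepNe hstepu using hstep
  obtain ⟨B₀, hB₀⟩ := hE
  obtain ⟨x₀, hx₀, -⟩ := hbad B₀ hB₀
  let F : {p : Finset V × V // p.1 ∈ E} → {p : Finset V × V // p.1 ∈ E} :=
    fun s => ⟨step s.1.1 s.2 s.1.2, hstepE s.1.1 s.2 s.1.2⟩
  let seq : ℕ → {p : Finset V × V // p.1 ∈ E} := fun n => F^[n] ⟨(B₀, x₀), hB₀⟩
  let Bn : ℕ → Finset V := fun n => (seq n).1.1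
  let un : ℕ → V := fun n => (seq n).1.2
  have hseq : ∀ n, seq (n + 1) = F (seq n) := fun n => Function.iterate_succ_apply' F n _
  have hBE : ∀ n, Bn n ∈ E := fun n => (seq n).2
  have key : ∀ n, un (n + 1) ∈ Bn n ∧ un (n + 1) ∈ Bn (n + 1) ∧
      Bn (n + 1) ≠ Bn n ∧ un (n + 1) ≠ un n := by
    intro n
    have e1 : Bn (n + 1) = (step (Bn n) (seq n).2 (un n)).1 := by
      show (seq (n + 1)).1.1 = _
      rw [hseq n]
    have e2 : un (n + 1) = (step (Bn n) (seq n).2 (un n)).2 := by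
      show (seq (n + 1)).1.2 = _
      rw [hseq n]
    refine ⟨?_, ?_, ?_, ?_⟩
    · rw [e2]; exact hstepB _ _ _
    · rw [e1, e2]; exact hstepN _ _ _
    · rw [e1]; exact hstepNe _ _ _
    · rw [e2]; exact hstepu _ _ _
  -- pigeonhole
  obtain ⟨a, b, hab, hequ⟩ := Finite.exists_ne_map_eq_of_infinite (fun n : ℕ => un (n + 1))
  have hrep : ∃ d, 0 < d ∧ ∃ i, 1 ≤ i ∧ un i = un (i + d) := by
    rcases Nat.lt_or_ge a b with h | h
    · exact ⟨b - a, by omega, a + 1, by omega, by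
        have : a + 1 + (b - a) = b + 1 := by omega
        rw [this]; exact hequ⟩
    · have h' : b < a := by omega
      exact ⟨a - b, by omega, b + 1, by omega, by
        have : b + 1 + (a - b) = a + 1 := by omega
        rw [this]; exact hequ.symm⟩
  set d := Nat.find hrep with hd
  obtain ⟨hd0, i, hi1, hui⟩ := Nat.find_spec hrep
  have hd2 : 2 ≤ d := by
    by_contra hlt
    have hd1 : Nat.find hrep = 1 := by omega
    rw [hd1] at hui
    obtain ⟨m, hm⟩ : ∃ m, i = m + 1 := ⟨i - 1, by omega⟩
    rw [hm] at hui
    exact (key (m + 1)).2.2.2 (by rw [show m + 1 + 1 = m + 1 + 1 from rfl] at hui; exact hui.symm)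
  have hconf : ∃ t w B, IsConfig E t w B := by
    refine ⟨d, fun k => un (i + k), fun k => Bn (i + k), hd2, ?_, ?_, ?_, ?_⟩
    · intro k hk
      exact hBE (i + k)
    · intro k hk l hl hkl
      rcases Nat.lt_or_ge k l with h | h
      · intro he
        have : l - k < d := by omega
        exact Nat.find_min hrep this ⟨by omega, i + k, by omega, by
          rw [show i + k + (l - k) = i + l by omega]; exact he⟩
      · have h' : l < k := by omega
        intro he
        have : k - l < d := by omega
        exact Nat.find_min hrep this ⟨by omega, i + l, by omega, by
          rw [show i + l + (k - l) = i + k by omega]; exact he.symm⟩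
    · intro k hk
      constructor
      · show un (i + k) ∈ Bn (i + k)
        obtain ⟨m, hm⟩ : ∃ m, i + k = m + 1 := ⟨i + k - 1, by omega⟩
        rw [hm]
        exact (key m).2.1
      · show un (i + (k + 1) % d) ∈ Bn (i + k)
        rcases Nat.lt_or_ge (k + 1) d with h | h
        · rw [Nat.mod_eq_of_lt h, show i + (k + 1) = (i + k) + 1 by omega]
          exact (key (i + k)).1
        · have hk1 : k + 1 = d := by omega
          rw [hk1, Nat.mod_self, Nat.add_zero, hui,
            show i + d = (i + k) + 1 by omega]
          exact (key (i + k)).1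
    · refine ⟨0, by omega, ?_⟩
      show Bn (i + 0) ≠ Bn (i + (0 + 1) % d)
      rw [Nat.mod_eq_of_lt (by omega), Nat.add_zero]
      exact fun he => (key i).2.2.1 he.symm
  obtain ⟨t, ht, hcycle⟩ := config_to_cycle E hconf
  exact hcyc t ht hcycle

lemma main_aux {V : Type} [Fintype V] :
    ∀ n (E : Set (Finset V)), E.ncard ≤ n → (∀ A ∈ E, 2 ≤ A.card) →
      (∀ t, 2 ≤ t → ¬ HypCycle E t) →
      ∃ Y : Set V, ∀ A ∈ E, ∃! v, v ∈ A ∧ v ∈ Y := by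
  intro n
  induction n with
  | zero =>
    intro E hn _ _
    have hfin : E.Finite := Set.toFinite E
    have hemp : E = ∅ := by
      rw [← Set.ncard_eq_zero hfin]; omega
    exact ⟨∅, by simp [hemp]⟩
  | succ n ih =>
    intro E hn hcard hcyc
    rcases Set.eq_empty_or_nonempty E with rfl | hE
    · exact ⟨∅, by simp⟩
    obtain ⟨A, hA, hleaf⟩ := exists_leaf E hE hcyc
    set E' := E \ {A} with hE'def
    have hsub : E' ⊆ E := Set.diff_subset
    have hn' : E'.ncard ≤ n := by
      have h1 : E'.ncard < E.ncard :=
        Set.ncard_diff_singleton_lt_of_mem hA (Set.toFinite E)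
      omega
    have hcyc' : ∀ t, 2 ≤ t → ¬ HypCycle E' t :=
      fun t ht h => hcyc t ht (hypCycle'_mono hsub h)
    obtain ⟨Y', hY'⟩ := ih E' hn' (fun B hB => hcard B (hsub hB)) hcyc'
    set P : Set V := {x | x ∈ A ∧ ∀ B ∈ E, B ≠ A → x ∉ B} with hPdef
    have hPnotB : ∀ x ∈ P, ∀ B ∈ E', x ∉ B := by
      intro x hx B hB
      exact hx.2 B hB.1 hB.2
    have hnotP : ∀ x, x ∈ A → x ∉ P → ∃ B ∈ E, B ≠ A ∧ x ∈ B := by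
      intro x hxA hxP
      by_contra hcon
      push_neg at hcon
      exact hxP ⟨hxA, fun B hB hBA hxB => hcon B hB hBA hxB⟩
    -- a private vertex exists
    obtain ⟨p, hpA, hpP⟩ : ∃ p, p ∈ A ∧ p ∈ P := by
      obtain ⟨x, hx, y, hy, hxy⟩ := Finset.one_lt_card.mp (show 1 < A.card by have := hcard A hA; omega)
      by_cases hxP : x ∈ P
      · exact ⟨x, hx, hxP⟩
      by_cases hyP : y ∈ P
      · exact ⟨y, hy, hyP⟩
      exact absurd (hleaf x hx y hy (hnotP x hx hxP) (hnotP y hy hyP)) hxy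
    by_cases hvy : ∃ x, x ∈ A ∧ x ∈ Y' ∧ x ∉ P
    · obtain ⟨v, hvA, hvY, hvP⟩ := hvy
      refine ⟨Y' \ P, ?_⟩
      intro B hB
      rcases eq_or_ne B A with rfl | hBA
      · refine ⟨v, ⟨hvA, hvY, hvP⟩, ?_⟩
        rintro w ⟨hwA, hwY, hwP⟩
        exact hleaf w hwA v hvA (hnotP w hwA hwP) (hnotP v hvA hvP)
      · have hBE' : B ∈ E' := ⟨hB, hBA⟩
        obtain ⟨w, ⟨hwB, hwY⟩, huniq⟩ := hY' B hBE'
        refine ⟨w, ⟨hwB, hwY, fun hwP => hPnotB w hwP B hBE' hwB⟩, ?_⟩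
        rintro w' ⟨hw'B, hw'Y, -⟩
        exact huniq w' ⟨hw'B, hw'Y⟩
    · push_neg at hvy
      refine ⟨insert p (Y' \ P), ?_⟩
      intro B hB
      rcases eq_or_ne B A with rfl | hBA
      · refine ⟨p, ⟨hpA, Set.mem_insert _ _⟩, ?_⟩
        rintro w ⟨hwA, hwY⟩
        rcases hwY with rfl | ⟨hwY', hwP⟩
        · rfl
        · exact absurd hwP (not_not.mpr (hvy w hwA hwY'))
      · have hBE' : B ∈ E' := ⟨hB, hBA⟩
        obtain ⟨w, ⟨hwB, hwY⟩, huniq⟩ := hY' B hBE'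
        have hwP : w ∉ P := fun h => hPnotB w h B hBE' hwB
        refine ⟨w, ⟨hwB, Set.mem_insert_of_mem _ ⟨hwY, hwP⟩⟩, ?_⟩
        rintro w' ⟨hw'B, hw'Y⟩
        rcases hw'Y with rfl | ⟨hw'Y', -⟩
        · exact absurd hw'B (hPnotB w' hpP B hBE')
        · exact huniq w' ⟨hw'B, hw'Y'⟩

end ConfigAux

/-- Let `H` be a hypergraph on a finite vertex set such that every hyperedge has at least
two vertices and there is no cycle of any length `t ≥ 2`.  Then the vertex set can be
partitioned into sets `X` and `Y` such that every hyperedge has exactly one vertex in `Y`. -/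
theorem stmt14 {V : Type} [Fintype V] (E : Set (Finset V))
    (hcard : ∀ A ∈ E, 2 ≤ A.card)
    (hcyc : ∀ t, 2 ≤ t → ¬ HypCycle E t) :
    ∃ X Y : Set V, X ∪ Y = Set.univ ∧ Disjoint X Y ∧
      ∀ A ∈ E, ∃! v, v ∈ A ∧ v ∈ Y := by
  obtain ⟨Y, hY⟩ := main_aux E.ncard E le_rfl hcard hcyc
  exact ⟨Yᶜ, Y, by simp, disjoint_compl_left, hY⟩
end
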